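/- For all natural numbers n ≥ i ≥ 0, the number of points at level i in all G-Motzkin paths of length n equals the number of h-steps at level i in all G-Motzkin paths of length n+1. -/

import Mathlib

/-- Steps of a G-Motzkin path: up `(1,1)`, down `(1,-1)`, horizontal `(1,0)`,
vertical `(0,-1)`. -/
inductive GStep : Type
  | u | d | h | v
deriving DecidableEq, Repr

/-- Horizontal displacement of a step. -/
def GStep.x : GStep → ℕ
  | .u => 1
  | .d => 1
  | .h => 1
  | .v => 0

/-- Vertical displacement of a step. -/
def GStep.y : GStep → ℤ
  | .u => 1
  | .d => -1
  | .h => 0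
  | .v => -1

/-- The height (ordinate) of the path after its first `k` steps. -/
def gHeight (p : List GStep) (k : ℕ) : ℤ :=
  ((p.take k).map GStep.y).sum

/-- A G-Motzkin path: it stays in the first quadrant (all intermediate heights
are nonnegative) and ends at height `0`. -/
def IsGMotzkin (p : List GStep) : Prop :=
  (∀ k ≤ p.length, 0 ≤ gHeight p k) ∧ gHeight p p.length = 0

/-- The length of a G-Motzkin path, i.e. the abscissa of its final point. -/
def gLength (p : List GStep) : ℕ :=
  (p.map GStep.x).sum

def gIns (p : List GStep) (k : ℕ) : List GStep := p.take k ++ GStep.h :: p.drop k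

lemma length_gIns (p : List GStep) (k : ℕ) (hk : k ≤ p.length) :
    (gIns p k).length = p.length + 1 := by
  simp [gIns, List.length_take]; omega

lemma gHeight_gIns_le (p : List GStep) (k j : ℕ) (hk : k ≤ p.length) (hj : j ≤ k) :
    gHeight (gIns p k) j = gHeight p j := by
  unfold gHeight gIns
  rw [List.take_append]
  have h1 : (p.take k).length = k := by simp; omega
  have : j - (p.take k).length = 0 := by omega
  rw [this, List.take_zero, List.append_nil, List.take_take]
  rw [min_eq_left hj]

lemma gHeight_gIns_ge (p : List GStep) (k m : ℕ) (hk : k ≤ p.length) (hm : k ≤ m) :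
    gHeight (gIns p k) (m + 1) = gHeight p m := by
  unfold gHeight gIns
  have h1 : (p.take k).length = k := by simp; omega
  rw [List.take_append, h1, List.take_of_length_le (by omega)]
  have h2 : m + 1 - k = (m - k) + 1 := by omega
  rw [h2]
  have h3 : p.take m = p.take k ++ (p.drop k).take (m - k) := by
    rw [← List.take_add]; congr 1; omega
  rw [h3]
  simp [GStep.y]

lemma gLength_gIns (p : List GStep) (k : ℕ) :
    gLength (gIns p k) = gLength p + 1 := by
  conv_rhs => rw [← List.take_append_drop k p]
  simp only [gLength, gIns, List.map_append, List.sum_append, List.map_cons,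
    List.sum_cons, GStep.x]
  omega

lemma gIns_inj (p p' : List GStep) (k : ℕ) (hk : k ≤ p.length) (hk' : k ≤ p'.length)
    (h : gIns p k = gIns p' k) : p = p' := by
  unfold gIns at h
  have h1 : (p.take k).length = (p'.take k).length := by simp; omega
  obtain ⟨ha, hb⟩ := List.append_inj h h1
  have hc : p.drop k = p'.drop k := by simpa using hb
  rw [← List.take_append_drop k p, ← List.take_append_drop k p', ha, hc]

/-- For all `n ≥ i ≥ 0`: the number of points at level `i` in all G-Motzkin
paths of length `n` equals the number of h-steps at level `i` in all
G-Motzkin paths of length `n+1`. A point of a path is one of its `p.length + 1`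
lattice points, counted as a pair (path, `k`) with `k ≤ p.length`; it is at
level `i` if its ordinate is `i`. An h-step is at level `i` if the ordinate
of its endpoint is `i`. -/
theorem points_level_eq_hSteps_level (n i : ℕ) (hin : i ≤ n) :
    Set.ncard {pk : List GStep × ℕ |
        IsGMotzkin pk.1 ∧ gLength pk.1 = n ∧
        pk.2 ≤ pk.1.length ∧ gHeight pk.1 pk.2 = (i : ℤ)} =
    Set.ncard {pk : List GStep × ℕ |
        IsGMotzkin pk.1 ∧ gLength pk.1 = n + 1 ∧
        pk.1[pk.2]? = some GStep.h ∧ gHeight pk.1 (pk.2 + 1) = (i : ℤ)} := by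
  have key : {pk : List GStep × ℕ |
        IsGMotzkin pk.1 ∧ gLength pk.1 = n + 1 ∧
        pk.1[pk.2]? = some GStep.h ∧ gHeight pk.1 (pk.2 + 1) = (i : ℤ)} =
      (fun pk : List GStep × ℕ => (gIns pk.1 pk.2, pk.2)) '' {pk : List GStep × ℕ |
        IsGMotzkin pk.1 ∧ gLength pk.1 = n ∧
        pk.2 ≤ pk.1.length ∧ gHeight pk.1 pk.2 = (i : ℤ)} := by
    ext ⟨q, k⟩
    simp only [Set.mem_setOf_eq, Set.mem_image, Prod.mk.injEq, Prod.exists]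
    constructor
    · rintro ⟨⟨hnn, hend⟩, hlen, hget, hht⟩
      have hk : k < q.length := by
        by_contra hc
        rw [List.getElem?_eq_none (by omega)] at hget
        cases hget
      set p : List GStep := q.take k ++ q.drop (k + 1) with hp
      have hq : q = gIns p k := by
        have hq1 : q = q.take k ++ q[k] :: q.drop (k + 1) := by
          conv_lhs => rw [← List.take_append_drop k q]
          rw [List.drop_eq_getElem_cons hk]
        have hqk : q[k] = GStep.h := by
          have := List.getElem?_eq_getElem hk
          rw [hget] at this
          exact (Option.some_injective _ this.symm)
        unfold gIns
        have htk : p.take k = q.take k := by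
          rw [hp, List.take_append]
          have : (q.take k).length = k := by simp; omega
          rw [List.take_take]
          simp [this, Nat.min_self]
        have hdk : p.drop k = q.drop (k + 1) := by
          rw [hp, List.drop_append]
          have : (q.take k).length = k := by simp; omega
          simp [this]
        rw [htk, hdk, ← hqk, ← hq1]
      have hpl : p.length = q.length - 1 := by simp [hp]; omega
      have hkp : k ≤ p.length := by omega
      refine ⟨p, k, ⟨⟨⟨?_, ?_⟩, ?_, hkp, ?_⟩, hq.symm, rfl⟩⟩
      · intro j hj
        rcases le_or_gt j k with hjk | hjk
        · have := gHeight_gIns_le p k j hkp hjk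
          rw [← hq] at this
          rw [← this]; exact hnn j (by omega)
        · have := gHeight_gIns_ge p k j hkp (by omega)
          rw [← hq] at this
          rw [← this]; exact hnn (j + 1) (by omega)
      · have := gHeight_gIns_ge p k p.length hkp hkp
        rw [← hq] at this
        rw [← this]
        have : p.length + 1 = q.length := by omega
        rw [this]; exact hend
      · have := gLength_gIns p k
        rw [← hq] at this
        omega
      · have := gHeight_gIns_ge p k k hkp le_rfl
        rw [← hq] at this
        rw [← this]; exact hht
    · rintro ⟨p, k', ⟨⟨⟨hnn, hend⟩, hlen, hk, hht⟩, hq, rfl⟩⟩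
      subst hq
      have hql : (gIns p k').length = p.length + 1 := length_gIns p k' hk
      refine ⟨⟨?_, ?_⟩, ?_, ?_, ?_⟩
      · intro j hj
        rcases le_or_gt j k' with hjk | hjk
        · rw [gHeight_gIns_le p k' j hk hjk]; exact hnn j (by omega)
        · obtain ⟨m, rfl⟩ : ∃ m, j = m + 1 := ⟨j - 1, by omega⟩
          rw [gHeight_gIns_ge p k' m hk (by omega)]
          exact hnn m (by omega)
      · rw [hql, gHeight_gIns_ge p k' p.length hk hk]; exact hend
      · rw [gLength_gIns]; omega
      · unfold gIns
        rw [List.getElem?_append_right (by simp [List.length_take])]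
        simp [List.length_take, Nat.min_eq_left hk]
      · rw [gHeight_gIns_ge p k' k' hk le_rfl]; exact hht
  rw [key]
  refine (Set.ncard_image_of_injOn ?_).symm
  rintro ⟨p, k⟩ hp ⟨p', k'⟩ hp' heq
  simp only [Prod.mk.injEq] at heq
  obtain ⟨h1, h2⟩ := heq
  subst h2
  have := gIns_inj p p' k hp.2.2.1 hp'.2.2.1 h1
  simp [this]
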